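/- arXiv:quant-ph/0111030 — 2 statements merged into one kernel-verified Lean document; each statement's English description precedes it below -/
import Mathlib

section
/- Let F be a finite field with |F| ≥ 2, n and k positive integers, and V ⊆ F^n a linear code. For A ⊆ {1,…,n}, say a word w ∈ F^n is consistent on A if there exists v ∈ V with v_i = w_i for all i ∈ A. Fix w₀ ∈ F^n and, for each ℓ = 1,…,k, an arbitrary (adaptive) function w_ℓ : F^{ℓ−1} → F^n. Then the set of tuples (b₁,…,b_k) ∈ F^k for which there exists a set A ⊆ {1,…,n} such that w₀ is NOT consistent on A yet for every ℓ the word w_ℓ(b₁,…,b_{ℓ−1}) + b_ℓ·w₀ is consistent on A, has cardinality at most 2^n. Consequently, when b₁,…,b_k are chosen independently and uniformly at random from F, the probability of this event is at most 2^n/|F|^k ≤ 2^{n−k}. -/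
/-- `w` is consistent on the set `A` of positions: some codeword of `V` agrees
with `w` on every position in `A`. -/
def ConsistentOn {F : Type*} [Field F] {n : ℕ} (V : Submodule F (Fin n → F))
    (A : Finset (Fin n)) (u : Fin n → F) : Prop :=
  ∃ v ∈ V, ∀ i ∈ A, v i = u i

/-- The set of "bad" challenge tuples `(b₁, …, b_k)`: there is a set `A` of
positions on which `w₀` is *not* consistent, yet every broadcast word
`w_ℓ(b₁,…,b_{ℓ-1}) + b_ℓ • w₀` is consistent on `A`.  The word `w_ℓ` may depend
adaptively on the previously revealed challenges. -/
def badChallenges (F : Type*) [Field F] (n k : ℕ) (V : Submodule F (Fin n → F))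
    (w₀ : Fin n → F) (w : (ℓ : Fin k) → (Fin ℓ.val → F) → (Fin n → F)) :
    Set (Fin k → F) :=
  {b | ∃ A : Finset (Fin n),
    ¬ ConsistentOn V A w₀ ∧
    ∀ ℓ : Fin k, ConsistentOn V A
      (w ℓ (fun j => b (Fin.castLE ℓ.isLt.le j)) + b ℓ • w₀)}

/-- For a fixed `A` with `w₀` inconsistent, at most one challenge tuple passes. -/
lemma unique_passing {F : Type*} [Field F] {n k : ℕ}
    (V : Submodule F (Fin n → F)) (w₀ : Fin n → F)
    (w : (ℓ : Fin k) → (Fin ℓ.val → F) → (Fin n → F))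
    (A : Finset (Fin n)) (hA : ¬ ConsistentOn V A w₀)
    (b b' : Fin k → F)
    (hb : ∀ ℓ : Fin k, ConsistentOn V A
      (w ℓ (fun j => b (Fin.castLE ℓ.isLt.le j)) + b ℓ • w₀))
    (hb' : ∀ ℓ : Fin k, ConsistentOn V A
      (w ℓ (fun j => b' (Fin.castLE ℓ.isLt.le j)) + b' ℓ • w₀)) :
    b = b' := by
  have key : ∀ m : ℕ, ∀ hm : m < k, b ⟨m, hm⟩ = b' ⟨m, hm⟩ := by
    intro m
    induction m using Nat.strong_induction_on with
    | _ m ih =>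
      intro hm
      set ℓ : Fin k := ⟨m, hm⟩ with hℓ
      have hpre : (fun j : Fin ℓ.val => b (Fin.castLE ℓ.isLt.le j))
          = (fun j : Fin ℓ.val => b' (Fin.castLE ℓ.isLt.le j)) := by
        funext j
        have : b ⟨j.val, lt_trans j.isLt hm⟩ = b' ⟨j.val, lt_trans j.isLt hm⟩ :=
          ih j.val j.isLt (lt_trans j.isLt hm)
        simpa [Fin.castLE] using this
      by_contra hne
      obtain ⟨v1, hv1, h1⟩ := hb ℓ
      obtain ⟨v2, hv2, h2⟩ := hb' ℓ
      apply hA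
      set c : F := b ℓ - b' ℓ with hc
      have hc0 : c ≠ 0 := sub_ne_zero.mpr hne
      refine ⟨c⁻¹ • (v1 - v2), V.smul_mem _ (V.sub_mem hv1 hv2), ?_⟩
      intro i hi
      have e1 := h1 i hi
      have e2 := h2 i hi
      rw [hpre] at e1
      have : v1 i - v2 i = c * w₀ i := by
        simp only [Pi.add_apply, Pi.smul_apply, smul_eq_mul] at e1 e2
        rw [e1, e2, hc]; ring
      simp only [Pi.smul_apply, Pi.sub_apply, smul_eq_mul, this]
      field_simp
  funext ℓ
  have := key ℓ.val ℓ.isLt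
  simpa using this

/-- Soundness of the modified "verifiable blob" protocol of [CCD88]: at most `2^n` of
the `|F|^k` challenge tuples are bad, so the probability (under uniformly random
independent challenges) that an adaptive adversary passes while `w₀` is inconsistent
on some set `A` is at most `2^n / |F|^k ≤ 2^{n-k}`. -/
theorem stmt_2 (F : Type*) [Field F] [Fintype F] (hF : 2 ≤ Fintype.card F)
    (n k : ℕ) (hn : 0 < n) (hk : 0 < k)
    (V : Submodule F (Fin n → F))
    (w₀ : Fin n → F)
    (w : (ℓ : Fin k) → (Fin ℓ.val → F) → (Fin n → F)) :
    (badChallenges F n k V w₀ w).ncard ≤ 2 ^ n ∧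
    ((badChallenges F n k V w₀ w).ncard : ℝ) / (Fintype.card F : ℝ) ^ k
      ≤ (2 : ℝ) ^ n / (Fintype.card F : ℝ) ^ k ∧
    (2 : ℝ) ^ n / (Fintype.card F : ℝ) ^ k ≤ (2 : ℝ) ^ ((n : ℤ) - (k : ℤ)) := by
  classical
  have hcard : (badChallenges F n k V w₀ w).ncard ≤ 2 ^ n := by
    set S := badChallenges F n k V w₀ w
    -- choice of witness A for each bad b
    have hex : ∀ b ∈ S, ∃ A : Finset (Fin n),
        ¬ ConsistentOn V A w₀ ∧
        ∀ ℓ : Fin k, ConsistentOn V A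
          (w ℓ (fun j => b (Fin.castLE ℓ.isLt.le j)) + b ℓ • w₀) := fun b hb => hb
    set f : (Fin k → F) → Finset (Fin n) := fun b =>
      if h : b ∈ S then (hex b h).choose else ∅ with hf
    have hinj : Set.InjOn f S := by
      intro b hb b' hb' hEq
      simp only [hf, dif_pos hb, dif_pos hb'] at hEq
      obtain ⟨hA1, hp1⟩ := (hex b hb).choose_spec
      obtain ⟨hA2, hp2⟩ := (hex b' hb').choose_spec
      rw [hEq] at hA1 hp1
      exact unique_passing V w₀ w _ hA2 b b' hp1 hp2
    calc S.ncard = (f '' S).ncard := (Set.ncard_image_of_injOn hinj).symm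
      _ ≤ (Set.univ : Set (Finset (Fin n))).ncard :=
          Set.ncard_le_ncard (Set.subset_univ _) Set.finite_univ
      _ = 2 ^ n := by
          rw [Set.ncard_univ, Nat.card_eq_fintype_card]
          simp
  refine ⟨hcard, ?_, ?_⟩
  · gcongr
    exact_mod_cast hcard
  · have hq : (2:ℝ)^k ≤ (Fintype.card F:ℝ)^k := by
      apply pow_le_pow_left₀ (by norm_num)
      exact_mod_cast hF
    have h1 : (2:ℝ)^n/(Fintype.card F:ℝ)^k ≤ (2:ℝ)^n/(2:ℝ)^k := by
      apply div_le_div_of_nonneg_left (by positivity) (by positivity) hq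
    have h2 : (2:ℝ)^n/(2:ℝ)^k = (2:ℝ)^((n:ℤ)-(k:ℤ)) := by
      rw [zpow_sub₀ (by norm_num : (2:ℝ) ≠ 0), zpow_natCast, zpow_natCast]
    linarith
end

section
/- Let p be a prime and n a positive integer with n < p, work over F = ZMod p, and let 0 ≤ δ ≤ n − 1 and δ' = n − δ − 1. Let d ∈ F^n be the unique vector with ∑_{i=1}^n d_i f(i) = f(0) for all polynomials f of degree less than n. Then, with respect to the standard dot product on F^n: (V₀^δ)^⊥ = W^{δ'} := {(d₁·q(1), …, d_n·q(n)) : q a polynomial over F of degree at most δ'}, and (V^δ)^⊥ = W₀^{δ'} := {(d₁·q(1), …, d_n·q(n)) : q a polynomial over F of degree at most δ' with q(0) = 0}. -/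
/-- The `i`-th evaluation point of the Reed–Solomon code: the element `i + 1` of
`ZMod p`, for `i : Fin n` (so the points are `1, 2, …, n`). -/
def rsPoint (p n : ℕ) (i : Fin n) : ZMod p := ((i.val + 1 : ℕ) : ZMod p)

/-- The Reed–Solomon code `V^δ`: vectors `(q(1), …, q(n))`, `deg q ≤ δ`. -/
def rsCode (p n δ : ℕ) : Set (Fin n → ZMod p) :=
  {v | ∃ q : Polynomial (ZMod p), q.natDegree ≤ δ ∧
        v = fun i => q.eval (rsPoint p n i)}

/-- The subcode `V₀^δ ⊆ V^δ`: vectors coming from polynomials with `q(0) = 0`. -/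
def rsCode0 (p n δ : ℕ) : Set (Fin n → ZMod p) :=
  {v | ∃ q : Polynomial (ZMod p), q.natDegree ≤ δ ∧ q.eval 0 = 0 ∧
        v = fun i => q.eval (rsPoint p n i)}

/-- The scaled Reed–Solomon code `W^{δ'}`: vectors `(d₁·q(1), …, d_n·q(n))`,
`deg q ≤ δ'`. -/
def scaledRSCode (p n δ' : ℕ) (d : Fin n → ZMod p) : Set (Fin n → ZMod p) :=
  {v | ∃ q : Polynomial (ZMod p), q.natDegree ≤ δ' ∧
        v = fun i => d i * q.eval (rsPoint p n i)}

/-- The scaled subcode `W₀^{δ'}`: as `W^{δ'}` but with `q(0) = 0`. -/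
def scaledRSCode0 (p n δ' : ℕ) (d : Fin n → ZMod p) : Set (Fin n → ZMod p) :=
  {v | ∃ q : Polynomial (ZMod p), q.natDegree ≤ δ' ∧ q.eval 0 = 0 ∧
        v = fun i => d i * q.eval (rsPoint p n i)}

/-- The dual of a set of words with respect to the standard dot product on `F^n`. -/
def dualSet {F : Type*} [CommRing F] {n : ℕ} (S : Set (Fin n → F)) : Set (Fin n → F) :=
  {u | ∀ v ∈ S, ∑ i, u i * v i = 0}

open Polynomial Finset

lemma rsPoint_ne_zero {p n : ℕ} (hnp : n < p) (i : Fin n) : rsPoint p n i ≠ 0 := by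
  intro h
  have hv := ZMod.val_cast_of_lt (show i.val + 1 < p by have := i.isLt; omega)
  unfold rsPoint at h
  rw [h, ZMod.val_zero] at hv; omega

lemma rsPoint_inj {p n : ℕ} (hnp : n < p) {i j : Fin n}
    (h : rsPoint p n i = rsPoint p n j) : i = j := by
  have hvi := ZMod.val_cast_of_lt (show i.val + 1 < p by have := i.isLt; omega)
  have hvj := ZMod.val_cast_of_lt (show j.val + 1 < p by have := j.isLt; omega)
  unfold rsPoint at h
  rw [h, hvj] at hvi
  exact Fin.ext (by omega)

/-- Duality of Reed–Solomon codes: with `δ' = n - δ - 1` and `d` the interpolation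
vector recovering `f(0)` from `f(1), …, f(n)`, the dual of `V₀^δ` is the scaled
Reed–Solomon code `W^{δ'}` and the dual of `V^δ` is `W₀^{δ'}`. -/
theorem stmt_7 (p n : ℕ) (hp : p.Prime) (hn : 0 < n) (hnp : n < p)
    (δ : ℕ) (hδ : δ ≤ n - 1)
    (d : Fin n → ZMod p)
    (hd : ∀ f : Polynomial (ZMod p), f.natDegree < n →
        ∑ i : Fin n, d i * f.eval (rsPoint p n i) = f.eval 0) :
    dualSet (rsCode0 p n δ) = scaledRSCode p n (n - δ - 1) d ∧
    dualSet (rsCode p n δ) = scaledRSCode0 p n (n - δ - 1) d := by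
  haveI : Fact p.Prime := ⟨hp⟩
  -- `d i ≠ 0` for every `i`
  have hd_ne : ∀ i, d i ≠ 0 := by
    intro i hi0
    set f : Polynomial (ZMod p) := ∏ j ∈ univ.erase i, (X - C (rsPoint p n j)) with hf
    have hfd : f.natDegree < n := by
      rw [hf, natDegree_prod_of_monic _ _ (fun j _ => monic_X_sub_C _)]
      simp only [natDegree_X_sub_C, Finset.sum_const, smul_eq_mul, mul_one]
      rw [Finset.card_erase_of_mem (mem_univ i), Finset.card_univ, Fintype.card_fin]
      omega
    have hzero : ∀ j : Fin n, j ≠ i → f.eval (rsPoint p n j) = 0 := by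
      intro j hj
      rw [hf, eval_prod]
      exact Finset.prod_eq_zero (Finset.mem_erase.2 ⟨hj, mem_univ j⟩) (by simp)
    have hsum := hd f hfd
    rw [Finset.sum_eq_single i (fun j _ hj => by rw [hzero j hj, mul_zero])
      (fun h => absurd (mem_univ i) h)] at hsum
    rw [hi0, zero_mul] at hsum
    have : f.eval 0 ≠ 0 := by
      rw [hf, eval_prod]
      refine Finset.prod_ne_zero_iff.2 fun j _ => ?_
      simp only [eval_sub, eval_X, eval_C, zero_sub, neg_ne_zero]
      exact rsPoint_ne_zero hnp j
    exact this hsum.symm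
  -- low power sums
  have hs_low : ∀ m, m < n → ∑ i, d i * (rsPoint p n i) ^ m =
      (if m = 0 then 1 else 0 : ZMod p) := by
    intro m hm
    have := hd (X ^ m) (by simpa [natDegree_X_pow] using hm)
    simpa [zero_pow_eq] using this
  -- the `n`-th power sum is nonzero
  have hsn : ∑ i, d i * (rsPoint p n i) ^ n ≠ 0 := by
    set Z : Polynomial (ZMod p) := ∏ i, (X - C (rsPoint p n i)) with hZ
    have hZm : Z.Monic := monic_prod_of_monic _ _ fun i _ => monic_X_sub_C _
    have hZd : Z.natDegree = n := by
      rw [hZ, natDegree_prod_of_monic _ _ (fun j _ => monic_X_sub_C _)]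
      simp
    have hgdeg : (X ^ n - Z).degree < (n : WithBot ℕ) := by
      have := Polynomial.degree_sub_lt (p := (X ^ n : Polynomial (ZMod p))) (q := Z)
        (by rw [degree_X_pow, degree_eq_natDegree hZm.ne_zero, hZd])
        (by exact pow_ne_zero _ X_ne_zero)
        (by rw [monic_X_pow n |>.leadingCoeff, hZm.leadingCoeff])
      rwa [degree_X_pow] at this
    have hgnat : (X ^ n - Z).natDegree < n := by
      rcases eq_or_ne (X ^ n - Z) 0 with h | h
      · rw [h]; simpa using hn
      · exact (natDegree_lt_iff_degree_lt h).2 (by exact_mod_cast hgdeg)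
    have hgev : ∀ i : Fin n, (X ^ n - Z).eval (rsPoint p n i) = (rsPoint p n i) ^ n := by
      intro i
      have : Z.eval (rsPoint p n i) = 0 := by
        rw [hZ, eval_prod]
        exact Finset.prod_eq_zero (mem_univ i) (by simp)
      simp [this]
    have hsum := hd (X ^ n - Z) hgnat
    have hZ0 : Z.eval 0 ≠ 0 := by
      rw [hZ, eval_prod]
      refine Finset.prod_ne_zero_iff.2 fun j _ => ?_
      simp only [eval_sub, eval_X, eval_C, zero_sub, neg_ne_zero]
      exact rsPoint_ne_zero hnp j
    have : (X ^ n - Z).eval 0 = -Z.eval 0 := by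
      simp [zero_pow hn.ne']
    rw [this] at hsum
    intro habs
    apply hZ0
    have : ∑ i, d i * (rsPoint p n i) ^ n = -Z.eval 0 := by
      rw [← hsum]
      exact Finset.sum_congr rfl fun i _ => by rw [hgev i]
    rw [habs] at this
    exact (neg_eq_zero.1 this.symm)
  -- the easy inclusion computation
  have easy : ∀ q f : Polynomial (ZMod p), q.natDegree ≤ n - δ - 1 → f.natDegree ≤ δ →
      ∑ i, (d i * q.eval (rsPoint p n i)) * f.eval (rsPoint p n i) = q.eval 0 * f.eval 0 := by
    intro q f hq hf
    have hqf : (q * f).natDegree < n := by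
      have := natDegree_mul_le (p := q) (q := f)
      omega
    calc ∑ i, (d i * q.eval (rsPoint p n i)) * f.eval (rsPoint p n i)
        = ∑ i, d i * (q * f).eval (rsPoint p n i) := by
          exact Finset.sum_congr rfl fun i _ => by rw [eval_mul]; ring
      _ = (q * f).eval 0 := hd _ hqf
      _ = q.eval 0 * f.eval 0 := by rw [eval_mul]
  -- the hard direction
  have hard : ∀ u : Fin n → ZMod p,
      (∀ k, 1 ≤ k → k ≤ δ → ∑ i, u i * (rsPoint p n i) ^ k = 0) →
      ∃ q : Polynomial (ZMod p), q.natDegree ≤ n - δ - 1 ∧ q.eval 0 = ∑ i, u i ∧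
        ∀ i, u i = d i * q.eval (rsPoint p n i) := by
    intro u horth
    set q := Lagrange.interpolate univ (rsPoint p n) (fun i => u i * (d i)⁻¹) with hqdef
    have hinjOn : Set.InjOn (rsPoint p n) ↑(univ : Finset (Fin n)) :=
      fun i _ j _ h => rsPoint_inj hnp h
    have hqdeg : q.degree < (n : WithBot ℕ) := by
      have h := Lagrange.degree_interpolate_lt (fun i => u i * (d i)⁻¹) hinjOn
      rw [show (#(univ : Finset (Fin n)) : WithBot ℕ) = (n : WithBot ℕ) by simp] at h
      exact h
    have hqnat : q.natDegree < n := by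
      rcases eq_or_ne q 0 with h | h
      · rw [h]; simpa using hn
      · exact (natDegree_lt_iff_degree_lt h).2 (by exact_mod_cast hqdeg)
    have hqev : ∀ i, q.eval (rsPoint p n i) = u i * (d i)⁻¹ := fun i =>
      Lagrange.eval_interpolate_at_node _ hinjOn (mem_univ i)
    have hu : ∀ i, u i = d i * q.eval (rsPoint p n i) := by
      intro i
      rw [hqev i, mul_comm (u i) ((d i)⁻¹), ← mul_assoc, mul_inv_cancel₀ (hd_ne i), one_mul]
    have hexp : ∀ k, ∑ i, u i * (rsPoint p n i) ^ k =
        ∑ j ∈ Finset.range n, q.coeff j * ∑ i, d i * (rsPoint p n i) ^ (j + k) := by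
      intro k
      have h1 : ∀ i, u i * (rsPoint p n i) ^ k =
          ∑ j ∈ Finset.range n, q.coeff j * (d i * (rsPoint p n i) ^ (j + k)) := by
        intro i
        rw [hu i, eval_eq_sum_range' hqnat, Finset.mul_sum, Finset.sum_mul]
        exact Finset.sum_congr rfl fun j _ => by rw [pow_add]; ring
      calc ∑ i, u i * (rsPoint p n i) ^ k
          = ∑ i, ∑ j ∈ Finset.range n, q.coeff j * (d i * (rsPoint p n i) ^ (j + k)) :=
            Finset.sum_congr rfl fun i _ => h1 i
        _ = ∑ j ∈ Finset.range n, ∑ i, q.coeff j * (d i * (rsPoint p n i) ^ (j + k)) :=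
            Finset.sum_comm
        _ = ∑ j ∈ Finset.range n, q.coeff j * ∑ i, d i * (rsPoint p n i) ^ (j + k) :=
            Finset.sum_congr rfl fun j _ => by rw [Finset.mul_sum]
    have claim : ∀ k, k ≤ δ → ∀ j, j < n → n - k ≤ j → q.coeff j = 0 := by
      intro k
      induction k with
      | zero => intro _ j hj1 hj2; omega
      | succ k ih =>
        intro hk j hj1 hj2
        have ihk := ih (by omega)
        by_cases hcase : n - k ≤ j
        · exact ihk j hj1 hcase
        · have hj : j = n - k - 1 := by omega
          have h0 := horth (k + 1) (by omega) hk
          rw [hexp (k + 1)] at h0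
          have hsingle : ∑ j' ∈ Finset.range n,
              q.coeff j' * ∑ i, d i * (rsPoint p n i) ^ (j' + (k + 1)) =
              q.coeff j * ∑ i, d i * (rsPoint p n i) ^ n := by
            rw [Finset.sum_eq_single j]
            · rw [show j + (k + 1) = n by omega]
            · intro j' hj' hne
              rcases lt_or_gt_of_ne hne with hlt | hgt
              · rw [hs_low _ (by omega), if_neg (by omega), mul_zero]
              · rw [ihk j' (Finset.mem_range.1 hj') (by omega), zero_mul]
            · intro h; exact absurd (Finset.mem_range.2 hj1) h
          rw [hsingle] at h0
          exact (mul_eq_zero.1 h0).resolve_right hsn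
    have hqfinal : q.natDegree ≤ n - δ - 1 := by
      rw [natDegree_le_iff_coeff_eq_zero]
      intro m hm
      by_cases hmn : m < n
      · exact claim δ le_rfl m hmn (by omega)
      · exact coeff_eq_zero_of_natDegree_lt (by omega)
    have heval0 : q.eval 0 = ∑ i, u i := by
      rw [← hd q hqnat]
      exact Finset.sum_congr rfl fun i _ => (hu i).symm
    exact ⟨q, hqfinal, heval0, hu⟩
  constructor
  · ext u
    simp only [dualSet, rsCode0, scaledRSCode, Set.mem_setOf_eq]
    constructor
    · intro hu
      have horth : ∀ k, 1 ≤ k → k ≤ δ → ∑ i, u i * (rsPoint p n i) ^ k = 0 := by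
        intro k hk1 hk2
        have := hu (fun i => (X ^ k : Polynomial (ZMod p)).eval (rsPoint p n i))
          ⟨X ^ k, by simpa [natDegree_X_pow] using hk2, by simp [zero_pow (by omega : k ≠ 0)], rfl⟩
        simpa using this
      obtain ⟨q, h1, _, h3⟩ := hard u horth
      exact ⟨q, h1, funext h3⟩
    · rintro ⟨q, hq, rfl⟩ v ⟨f, hf, hf0, rfl⟩
      rw [easy q f hq hf, hf0, mul_zero]
  · ext u
    simp only [dualSet, rsCode, scaledRSCode0, Set.mem_setOf_eq]
    constructor
    · intro hu
      have horth : ∀ k, 1 ≤ k → k ≤ δ → ∑ i, u i * (rsPoint p n i) ^ k = 0 := by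
        intro k _ hk2
        have := hu (fun i => (X ^ k : Polynomial (ZMod p)).eval (rsPoint p n i))
          ⟨X ^ k, by simpa [natDegree_X_pow] using hk2, rfl⟩
        simpa using this
      obtain ⟨q, h1, h2, h3⟩ := hard u horth
      have h0 : ∑ i, u i = 0 := by
        have := hu (fun i => (1 : Polynomial (ZMod p)).eval (rsPoint p n i))
          ⟨1, by simp, rfl⟩
        simpa using this
      exact ⟨q, h1, h2.trans h0, funext h3⟩
    · rintro ⟨q, hq, hq0, rfl⟩ v ⟨f, hf, rfl⟩
      rw [easy q f hq hf, hq0, zero_mul]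
end
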